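/- Baseline invariance in the tree policy gradient: under the assumptions of the tree policy gradient theorem, subtracting from the return of each non-leaf node i any baseline b(s_i) depending only on the state does not change the expectation; formally, E_{τ∼p_θ}[∑_{i∈N∖L} (d/dθ log π_θ(a_i|s_i)) · b(s_i)] = 0 for any function b : S → ℝ. -/

import Mathlib

/-!
At a non-leaf node with state `s`, the baseline term contributes
`b s * ∑ a, π_θ(a|s) ∂_θ log π_θ(a|s) = b s * ∂_θ ∑ a, π_θ(a|s) = 0`, the score identity.
The rest of the expectation is carried by the two subtrees, and vanishes by induction on the
depth once we know that the subtrees' state distributions also have total mass one. That follows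
because every truncated mass is at most one: if a convex combination of numbers in `[0, 1]`
equals one, each number with positive weight equals one.
-/

/-- Finite binary tree trajectories of a tree MDP: every node carries a state,
every non-leaf node also carries an action. -/
inductive BT (S A : Type) : Type
  | leaf (s : S)
  | node (s : S) (a : A) (l r : BT S A)
deriving DecidableEq

namespace BT

variable {S A : Type}

/-- State at the root of the trajectory. -/
def root : BT S A → S
  | leaf s => s
  | node s _ _ _ => s

/-- Number of nodes. -/
def size : BT S A → ℕ
  | leaf _ => 1
  | node _ _ l r => size l + size r + 1

/-- Total reward collected over all nodes of the trajectory. -/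
def reward (r : S → ℝ) : BT S A → ℝ
  | leaf s => r s
  | node s _ l ri => r s + reward r l + reward r ri

/-- Probability of generating a given trajectory starting from its root state:
the product, over non-leaf nodes `i`, of `π(a_i|s_i) p⁻(s_{ch⁻(i)}|s_i,a_i)
p⁺(s_{ch⁺(i)}|s_i,a_i)`, together with the leaf-indicator consistency
conditions given by `lf`. -/
def prob (lf : S → Bool) (π : S → A → ℝ) (pm pp : S → A → S → ℝ) : BT S A → ℝ
  | leaf s => if lf s then 1 else 0
  | node s a l ri =>
      (if lf s then 0 else 1) * π s a * pm s a (root l) * pp s a (root ri)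
        * prob lf π pm pp l * prob lf π pm pp ri

end BT

/-- The (finite) set of all trajectories of depth at most `n`. -/
def treesUpTo (S A : Type) [Fintype S] [Fintype A] [DecidableEq S] [DecidableEq A] :
    ℕ → Finset (BT S A)
  | 0 => Finset.univ.image BT.leaf
  | n + 1 =>
      Finset.univ.image BT.leaf ∪
        ((Finset.univ ×ˢ Finset.univ ×ˢ treesUpTo S A n ×ˢ treesUpTo S A n).image
          (fun x : S × A × BT S A × BT S A => BT.node x.1 x.2.1 x.2.2.1 x.2.2.2))

namespace BT

/-- Baseline integrand: the sum, over the non-leaf nodes `i` of the trajectory,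
of `(d/dθ log π_θ(a_i|s_i)) · b(s_i)`, for a state-only baseline `b`. -/
noncomputable def baselineTerm {S A : Type} (b : S → ℝ) (π : ℝ → S → A → ℝ) (θ : ℝ) :
    BT S A → ℝ
  | leaf _ => 0
  | node s a l ri =>
      deriv (fun u => Real.log (π u s a)) θ * b s
        + baselineTerm b π θ l + baselineTerm b π θ ri

end BT

open Finset

section StdSimplex
variable {ι : Type*} [Fintype ι] {p f g : ι → ℝ}

lemma dotProduct_le_one_of_mem_stdSimplex (hp : p ∈ stdSimplex ℝ ι) (hf : ∀ i, f i ≤ 1) :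
    p ⬝ᵥ f ≤ 1 :=
  calc p ⬝ᵥ f ≤ ∑ i, p i := sum_le_sum fun i _ => mul_le_of_le_one_right (hp.1 i) (hf i)
    _ = 1 := hp.2

lemma eq_one_of_dotProduct_eq_one (hp : p ∈ stdSimplex ℝ ι) (hf : ∀ i, f i ≤ 1)
    (h : p ⬝ᵥ f = 1) {i : ι} (hi : p i ≠ 0) : f i = 1 := by
  have hle : ∀ j ∈ univ, p j * f j ≤ p j := fun j _ => mul_le_of_le_one_right (hp.1 j) (hf j)
  have hfix := (sum_eq_sum_iff_of_le hle).1 (h.trans hp.2.symm) i (mem_univ i)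
  exact (mul_eq_left₀ hi).1 hfix

lemma dotProduct_eq_zero_of_dotProduct_eq_one (hp : p ∈ stdSimplex ℝ ι) (hf : ∀ i, f i ≤ 1)
    (h : p ⬝ᵥ f = 1) (hg : ∀ i, f i = 1 → g i = 0) : p ⬝ᵥ g = 0 :=
  sum_eq_zero fun i _ => by
    by_cases hi : p i = 0
    · rw [hi, zero_mul]
    · rw [hg i (eq_one_of_dotProduct_eq_one hp hf h hi), mul_zero]

lemma dotProduct_mul_dotProduct_le_one {q : ι → ℝ} (hp : p ∈ stdSimplex ℝ ι)
    (hq : q ∈ stdSimplex ℝ ι) (hf0 : 0 ≤ f) (hf1 : ∀ i, f i ≤ 1) : (p ⬝ᵥ f) * (q ⬝ᵥ f) ≤ 1 :=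
  mul_le_one₀ (dotProduct_le_one_of_mem_stdSimplex hp hf1) (dotProduct_nonneg_of_nonneg hq.1 hf0)
    (dotProduct_le_one_of_mem_stdSimplex hq hf1)

end StdSimplex

lemma sum_mul_deriv_log_eq_zero {ι : Type*} [Fintype ι] {f : ι → ℝ → ℝ} {x : ℝ}
    (hpos : ∀ i, 0 < f i x) (hdiff : ∀ i, DifferentiableAt ℝ (f i) x)
    (hsum : ∀ y, ∑ i, f i y = 1) :
    ∑ i, f i x * deriv (fun y => Real.log (f i y)) x = 0 := by
  have hscore : ∀ i, f i x * deriv (fun y => Real.log (f i y)) x = deriv (f i) x := fun i => by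
    rw [((hdiff i).hasDerivAt.log (hpos i).ne').deriv, mul_div_cancel₀ _ (hpos i).ne']
  have hconst : (fun y => ∑ i, f i y) = fun _ => 1 := funext hsum
  simp only [hscore]
  rw [← deriv_fun_sum fun i _ => hdiff i, hconst, deriv_const]

namespace BT

variable {S A : Type}

def nodeSum (w : S → A → ℝ) : BT S A → ℝ
  | leaf _ => 0
  | node s a l r => w s a + nodeSum w l + nodeSum w r

lemma baselineTerm_eq_nodeSum (b : S → ℝ) (π : ℝ → S → A → ℝ) (θ : ℝ) (τ : BT S A) :
    baselineTerm b π θ τ = nodeSum (fun s a => deriv (fun u => Real.log (π u s a)) θ * b s) τ := by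
  induction τ with
  | leaf => rfl
  | node s a l r ihl ihr => rw [baselineTerm, nodeSum, ihl, ihr]

lemma prob_nonneg (lf : S → Bool) {π : S → A → ℝ} {pm pp : S → A → S → ℝ}
    (hπ : 0 ≤ π) (hpm : 0 ≤ pm) (hpp : 0 ≤ pp) (τ : BT S A) : 0 ≤ τ.prob lf π pm pp := by
  induction τ with
  | leaf s => rw [prob]; split_ifs <;> norm_num
  | node s a l r ihl ihr =>
    have hlf : (0 : ℝ) ≤ if lf s then 0 else 1 := by split_ifs <;> norm_num
    rw [prob]
    exact mul_nonneg (mul_nonneg (mul_nonneg (mul_nonneg (mul_nonneg hlf (hπ s a))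
      (hpm s a l.root)) (hpp s a r.root)) ihl) ihr

end BT

lemma sum_mul_root {S A : Type} [Fintype S] [DecidableEq S] (T : Finset (BT S A)) (F : S → ℝ)
    (g : BT S A → ℝ) :
    ∑ τ ∈ T, F τ.root * g τ = F ⬝ᵥ fun s => ∑ τ ∈ T with τ.root = s, g τ := by
  rw [← sum_fiberwise T BT.root]
  refine sum_congr rfl fun s _ => ?_
  rw [mul_sum]
  exact sum_congr rfl fun τ hτ => by rw [(mem_filter.1 hτ).2]

section Enumeration
variable {S A : Type} [Fintype S] [Fintype A] [DecidableEq S] [DecidableEq A]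

lemma sum_treesUpTo_succ (f : BT S A → ℝ) (n : ℕ) :
    ∑ τ ∈ treesUpTo S A (n + 1), f τ
      = ∑ s, f (.leaf s) + ∑ s, ∑ a, ∑ l ∈ treesUpTo S A n, ∑ r ∈ treesUpTo S A n,
          f (.node s a l r) := by
  have hdisj : Disjoint (univ.image (BT.leaf (A := A)))
      ((univ ×ˢ univ ×ˢ treesUpTo S A n ×ˢ treesUpTo S A n).image
        fun x : S × A × BT S A × BT S A => BT.node x.1 x.2.1 x.2.2.1 x.2.2.2) := by
    simp only [disjoint_left, mem_image]
    rintro _ ⟨s, -, rfl⟩ ⟨_, -, h⟩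
    cases h
  rw [treesUpTo, sum_union hdisj, sum_image fun _ _ _ _ h => BT.leaf.inj h,
    sum_image fun ⟨_, _, _, _⟩ _ ⟨_, _, _, _⟩ _ h => by cases h; rfl]
  simp only [sum_product]

lemma sum_filter_root_treesUpTo_zero (f : BT S A → ℝ) (s : S) :
    ∑ τ ∈ treesUpTo S A 0 with τ.root = s, f τ = f (.leaf s) := by
  rw [sum_filter, treesUpTo, sum_image fun _ _ _ _ h => BT.leaf.inj h]
  exact (Fintype.sum_eq_single s fun x hx => if_neg hx).trans (if_pos rfl)

lemma sum_filter_root_treesUpTo_succ (f : BT S A → ℝ) (n : ℕ) (s : S) :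
    ∑ τ ∈ treesUpTo S A (n + 1) with τ.root = s, f τ
      = f (.leaf s) + ∑ a, ∑ l ∈ treesUpTo S A n, ∑ r ∈ treesUpTo S A n, f (.node s a l r) := by
  rw [sum_filter, sum_treesUpTo_succ]
  congr 1
  · exact (Fintype.sum_eq_single s fun x hx => if_neg hx).trans (if_pos rfl)
  · refine (Fintype.sum_eq_single s fun x hx => sum_eq_zero fun a _ => sum_eq_zero fun l _ =>
      sum_eq_zero fun r _ => if_neg hx).trans ?_
    simp only [if_true]

end Enumeration

/-- Not normalised: `rootedExpectation lf π pm pp n 1 s` is the probability mass of the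
trajectories in `treesUpTo S A n` rooted at `s` (the `rootedMass_*` lemmas below). -/
noncomputable def rootedExpectation {S A : Type} [Fintype S] [Fintype A] [DecidableEq S]
    [DecidableEq A] (lf : S → Bool) (π : S → A → ℝ) (pm pp : S → A → S → ℝ) (n : ℕ)
    (g : BT S A → ℝ) (s : S) : ℝ :=
  ∑ τ ∈ treesUpTo S A n with τ.root = s, τ.prob lf π pm pp * g τ

section RootedExpectation
variable {S A : Type} [Fintype S] [Fintype A] [DecidableEq S] [DecidableEq A]
  (lf : S → Bool) {π : S → A → ℝ} {pm pp : S → A → S → ℝ}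

local notation "𝔼" => rootedExpectation lf π pm pp

lemma sum_treesUpTo_eq_dotProduct_rootedExpectation (F : S → ℝ) (n : ℕ) (g : BT S A → ℝ) :
    ∑ τ ∈ treesUpTo S A n, F τ.root * τ.prob lf π pm pp * g τ = F ⬝ᵥ 𝔼 n g := by
  simp only [mul_assoc]
  exact sum_mul_root _ F _

lemma rootedExpectation_zero (g : BT S A → ℝ) (s : S) :
    𝔼 0 g s = if lf s then g (.leaf s) else 0 := by
  rw [rootedExpectation, sum_filter_root_treesUpTo_zero, BT.prob]
  split_ifs <;> ring

lemma rootedExpectation_succ (n : ℕ) (g : BT S A → ℝ) (s : S) :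
    𝔼 (n + 1) g s = (if lf s then g (.leaf s) else 0)
      + ∑ a, ∑ l ∈ treesUpTo S A n, ∑ r ∈ treesUpTo S A n,
          (BT.node s a l r).prob lf π pm pp * g (.node s a l r) := by
  rw [rootedExpectation, sum_filter_root_treesUpTo_succ, BT.prob]
  congr 1
  split_ifs <;> ring

lemma sum_sum_prob_node_mul (n : ℕ) (s : S) (a : A) (g h : BT S A → ℝ) :
    ∑ l ∈ treesUpTo S A n, ∑ r ∈ treesUpTo S A n,
        (BT.node s a l r).prob lf π pm pp * (g l * h r)
      = (if lf s then 0 else 1) * π s a * ((pm s a ⬝ᵥ 𝔼 n g) * (pp s a ⬝ᵥ 𝔼 n h)) := by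
  have hsplit : ∀ l r : BT S A, (BT.node s a l r).prob lf π pm pp * (g l * h r)
      = (if lf s then 0 else 1) * π s a
        * ((pm s a l.root * (l.prob lf π pm pp * g l))
          * (pp s a r.root * (r.prob lf π pm pp * h r))) := fun l r => by
    rw [BT.prob]; ring
  simp only [hsplit, ← mul_sum]
  rw [← sum_mul, sum_mul_root, sum_mul_root]
  rfl

lemma rootedMass_succ (n : ℕ) (s : S) :
    𝔼 (n + 1) 1 s
      = if lf s then 1 else π s ⬝ᵥ fun a => (pm s a ⬝ᵥ 𝔼 n 1) * (pp s a ⬝ᵥ 𝔼 n 1) := by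
  have hnode := fun a => sum_sum_prob_node_mul lf (π := π) (pm := pm) (pp := pp) n s a 1 1
  simp only [Pi.one_apply, mul_one] at hnode
  rw [rootedExpectation_succ]
  simp only [Pi.one_apply, mul_one, hnode]
  split_ifs <;> simp [dotProduct]

lemma rootedExpectation_nodeSum_succ (w : S → A → ℝ) (n : ℕ) (s : S) :
    𝔼 (n + 1) (BT.nodeSum w) s = if lf s then 0 else π s ⬝ᵥ fun a =>
      w s a * ((pm s a ⬝ᵥ 𝔼 n 1) * (pp s a ⬝ᵥ 𝔼 n 1))
        + (pm s a ⬝ᵥ 𝔼 n (BT.nodeSum w)) * (pp s a ⬝ᵥ 𝔼 n 1)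
        + (pm s a ⬝ᵥ 𝔼 n 1) * (pp s a ⬝ᵥ 𝔼 n (BT.nodeSum w)) := by
  have hsplit : ∀ a (l r : BT S A),
      (BT.node s a l r).prob lf π pm pp * (w s a + BT.nodeSum w l + BT.nodeSum w r)
        = w s a * ((BT.node s a l r).prob lf π pm pp * ((1 : BT S A → ℝ) l * (1 : BT S A → ℝ) r))
          + (BT.node s a l r).prob lf π pm pp * (BT.nodeSum w l * (1 : BT S A → ℝ) r)
          + (BT.node s a l r).prob lf π pm pp * ((1 : BT S A → ℝ) l * BT.nodeSum w r) :=
    fun a l r => by simp only [Pi.one_apply]; ring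
  rw [rootedExpectation_succ]
  simp only [BT.nodeSum, hsplit, sum_add_distrib, ← mul_sum, sum_sum_prob_node_mul]
  split_ifs
  · simp
  · simp only [dotProduct, zero_add, one_mul]
    rw [← sum_add_distrib, ← sum_add_distrib]
    exact sum_congr rfl fun a _ => by ring

lemma rootedMass_nonneg (hπ : 0 ≤ π) (hpm : 0 ≤ pm) (hpp : 0 ≤ pp) (n : ℕ) : 0 ≤ 𝔼 n 1 :=
  fun _ => sum_nonneg fun τ _ => by simpa using BT.prob_nonneg lf hπ hpm hpp τ

lemma rootedMass_le_one (hπ : ∀ s, π s ∈ stdSimplex ℝ A) (hpm : ∀ s a, pm s a ∈ stdSimplex ℝ S)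
    (hpp : ∀ s a, pp s a ∈ stdSimplex ℝ S) (n : ℕ) (s : S) : 𝔼 n 1 s ≤ 1 := by
  induction n generalizing s with
  | zero => rw [rootedExpectation_zero]; split_ifs <;> norm_num
  | succ n ih =>
    have hM0 := rootedMass_nonneg lf (fun s => (hπ s).1) (fun s a => (hpm s a).1)
      (fun s a => (hpp s a).1) n
    rw [rootedMass_succ]
    split_ifs
    · exact le_rfl
    · exact dotProduct_le_one_of_mem_stdSimplex (hπ s) fun a =>
        dotProduct_mul_dotProduct_le_one (hpm s a) (hpp s a) hM0 ih

lemma rootedMass_children_eq_one (hπ : ∀ s, π s ∈ stdSimplex ℝ A)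
    (hpm : ∀ s a, pm s a ∈ stdSimplex ℝ S) (hpp : ∀ s a, pp s a ∈ stdSimplex ℝ S) {n : ℕ} {s : S}
    (hlf : lf s = false) (hmass : 𝔼 (n + 1) 1 s = 1) {a : A} (ha : π s a ≠ 0) :
    pm s a ⬝ᵥ 𝔼 n 1 = 1 ∧ pp s a ⬝ᵥ 𝔼 n 1 = 1 := by
  have hM0 := rootedMass_nonneg lf (fun s => (hπ s).1) (fun s a => (hpm s a).1)
    (fun s a => (hpp s a).1) n
  have hM1 := rootedMass_le_one lf hπ hpm hpp n
  rw [rootedMass_succ, hlf, if_neg Bool.false_ne_true] at hmass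
  have hprod := eq_one_of_dotProduct_eq_one (hπ s)
    (fun a => dotProduct_mul_dotProduct_le_one (hpm s a) (hpp s a) hM0 hM1) hmass ha
  have hl0 := dotProduct_nonneg_of_nonneg (hpm s a).1 hM0
  have hr0 := dotProduct_nonneg_of_nonneg (hpp s a).1 hM0
  have hl1 := dotProduct_le_one_of_mem_stdSimplex (hpm s a) hM1
  have hr1 := dotProduct_le_one_of_mem_stdSimplex (hpp s a) hM1
  constructor <;> nlinarith

theorem rootedExpectation_nodeSum_eq_zero (hπ : ∀ s, π s ∈ stdSimplex ℝ A)
    (hpm : ∀ s a, pm s a ∈ stdSimplex ℝ S) (hpp : ∀ s a, pp s a ∈ stdSimplex ℝ S)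
    {w : S → A → ℝ} (hw : ∀ s, π s ⬝ᵥ w s = 0) (n : ℕ) (s : S) (hmass : 𝔼 n 1 s = 1) :
    𝔼 n (BT.nodeSum w) s = 0 := by
  induction n generalizing s with
  | zero => rw [rootedExpectation_zero]; simp [BT.nodeSum]
  | succ n ih =>
    have hM1 := rootedMass_le_one lf hπ hpm hpp n
    rw [rootedExpectation_nodeSum_succ]
    cases hlf : lf s
    · rw [if_neg Bool.false_ne_true, ← hw s]
      refine sum_congr rfl fun a _ => ?_
      by_cases ha : π s a = 0
      · rw [ha, zero_mul, zero_mul]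
      obtain ⟨hl, hr⟩ := rootedMass_children_eq_one lf hπ hpm hpp hlf hmass ha
      dsimp only
      rw [hl, hr, dotProduct_eq_zero_of_dotProduct_eq_one (hpm s a) hM1 hl ih,
        dotProduct_eq_zero_of_dotProduct_eq_one (hpp s a) hM1 hr ih]
      ring
    · exact if_pos rfl

end RootedExpectation

theorem stmt5_general {S A : Type} [Fintype S] [Fintype A] [DecidableEq S] [DecidableEq A]
    (lf : S → Bool) (pinit : S → ℝ) (pm pp : S → A → S → ℝ)
    (π : ℝ → S → A → ℝ) (b : S → ℝ) (D : ℕ) (θ₀ : ℝ)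
    (hπpos : ∀ θ s a, 0 < π θ s a)
    (hπdiff : ∀ s a, Differentiable ℝ (fun θ => π θ s a))
    (hπsum : ∀ θ s, ∑ a : A, π θ s a = 1)
    (hpm0 : ∀ s a s', 0 ≤ pm s a s') (hpm1 : ∀ s a, ∑ s' : S, pm s a s' = 1)
    (hpp0 : ∀ s a s', 0 ≤ pp s a s') (hpp1 : ∀ s a, ∑ s' : S, pp s a s' = 1)
    (hmass : ∀ θ s, ∑ τ ∈ (treesUpTo S A D).filter (fun τ => BT.root τ = s),
        BT.prob lf (π θ) pm pp τ = 1) :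
    ∑ τ ∈ treesUpTo S A D,
      pinit (BT.root τ) * BT.prob lf (π θ₀) pm pp τ * BT.baselineTerm b π θ₀ τ
      = 0 := by
  set w : S → A → ℝ := fun s a => deriv (fun u => Real.log (π u s a)) θ₀ * b s
  have hscore : ∀ s, π θ₀ s ⬝ᵥ w s = 0 := fun s => by
    simp only [dotProduct, w, ← mul_assoc, ← sum_mul]
    rw [sum_mul_deriv_log_eq_zero (fun a => hπpos θ₀ s a) (fun a => hπdiff s a θ₀)
      (fun θ => hπsum θ s), zero_mul]
  have hzero : rootedExpectation lf (π θ₀) pm pp D (BT.nodeSum w) = 0 := funext fun s =>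
    rootedExpectation_nodeSum_eq_zero lf (fun s => ⟨fun a => (hπpos θ₀ s a).le, hπsum θ₀ s⟩)
      (fun s a => ⟨hpm0 s a, hpm1 s a⟩) (fun s a => ⟨hpp0 s a, hpp1 s a⟩) hscore D s
      (by simpa [rootedExpectation] using hmass θ₀ s)
  simp only [BT.baselineTerm_eq_nodeSum]
  rw [sum_treesUpTo_eq_dotProduct_rootedExpectation, hzero, dotProduct_zero]

/-- Baseline invariance in the tree policy gradient: for any baseline
`b : S → ℝ` depending only on the state,
`E_{τ∼p_θ}[∑_{i∈N∖L} (d/dθ log π_θ(a_i|s_i)) · b(s_i)] = 0`. -/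
theorem stmt5 {S A : Type} [Fintype S] [Fintype A] [DecidableEq S] [DecidableEq A]
    (lf : S → Bool) (pinit : S → ℝ) (pm pp : S → A → S → ℝ)
    (π : ℝ → S → A → ℝ) (b : S → ℝ) (D : ℕ) (θ₀ : ℝ)
    (hπpos : ∀ θ s a, 0 < π θ s a)
    (hπdiff : ∀ s a, Differentiable ℝ (fun θ => π θ s a))
    (hπsum : ∀ θ s, ∑ a : A, π θ s a = 1)
    (hpminit : ∀ s, 0 ≤ pinit s) (hpinit1 : ∑ s : S, pinit s = 1)
    (hpm0 : ∀ s a s', 0 ≤ pm s a s') (hpm1 : ∀ s a, ∑ s' : S, pm s a s' = 1)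
    (hpp0 : ∀ s a s', 0 ≤ pp s a s') (hpp1 : ∀ s a, ∑ s' : S, pp s a s' = 1)
    (hmass : ∀ θ s, ∑ τ ∈ (treesUpTo S A D).filter (fun τ => BT.root τ = s),
        BT.prob lf (π θ) pm pp τ = 1) :
    ∑ τ ∈ treesUpTo S A D,
      pinit (BT.root τ) * BT.prob lf (π θ₀) pm pp τ * BT.baselineTerm b π θ₀ τ
      = 0 :=
  stmt5_general lf pinit pm pp π b D θ₀ hπpos hπdiff hπsum hpm0 hpm1 hpp0 hpp1 hmass
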